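/- Fix n ∈ ℕ and q,a,b,c ∈ ℂ with q ≠ 0, q^j ≠ 1, a·q^j ≠ 1 and c·q^j ≠ 1 for 1 ≤ j ≤ n. Define the big q-Jacobi polynomial P_n(x) := Σ_{k=0}^{n} [(q^{−n};q)_k·(a b q^{n+1};q)_k·(x;q)_k / ((q;q)_k·(a q;q)_k·(c q;q)_k)]·q^k. Then P_n is an eigenfunction, with eigenvalue q^{−n}·(1 + a b q^{2n+1}), of the operator K₀^γ of the basic representation of the confluent Zhedanov algebra Z_V^γ (written here in the rescaled variable, i.e. the paper's identity K₀^γ P_n[λx] = q^{−n}(1+a b q^{2n+1})P_n[λx]): for every x ∈ ℂ∖{0}, [q·(c x + a·(x(1+b) − c·(1+q−x)))/x²]·P_n(x) + [(x−q a)(x−q c)/x²]·P_n(x/q) + [q·(x−1)·a·(b x−c)/x²]·P_n(q x) = q^{−n}·(1 + a b q^{2n+1})·P_n(x). -/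

import Mathlib

/-!
In the basis `φ k x = (x; q)_k` the operator `K₀^γ` is lower bidiagonal:
`K₀ φ_k = λ_k φ_k + μ_k φ_{k-1}` with `λ_k = q⁻ᵏ (1 + a b q^{2k+1})` and
`μ_k = -q⁻ᵏ (1 - qᵏ)(1 - a qᵏ)(1 - c qᵏ)`, because `φ_k (x / q)` and `(1 - x) φ_k (q x)` are
both multiples of `φ_{k-1}`. The coefficients `w_k` of `P_n` satisfy the two-term recurrence
`w_{k+1} μ_{k+1} = w_k (λ_n - λ_k)`, which is exactly what makes `Σ w_k φ_k` an eigenfunction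
with eigenvalue `λ_n`.
-/

open Finset

/-- The q-Pochhammer symbol `(z; q)_k`. -/
noncomputable def qPoch (z q : ℂ) (k : ℕ) : ℂ := ∏ j ∈ Finset.range k, (1 - z * q ^ j)

lemma qPoch_zero (z q : ℂ) : qPoch z q 0 = 1 := prod_range_zero _

lemma qPoch_succ (z q : ℂ) (k : ℕ) : qPoch z q (k + 1) = qPoch z q k * (1 - z * q ^ k) :=
  prod_range_succ _ _

lemma qPoch_succ' (z q : ℂ) (k : ℕ) : qPoch z q (k + 1) = (1 - z) * qPoch (z * q) q k := by
  simp only [qPoch, prod_range_succ', pow_zero, mul_one, pow_succ, mul_assoc, mul_comm]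

lemma qPoch_div_succ {q : ℂ} (hq : q ≠ 0) (z : ℂ) (k : ℕ) :
    qPoch (z / q) q (k + 1) = (1 - z / q) * qPoch z q k := by
  rw [qPoch_succ', div_mul_cancel₀ z hq]

lemma one_sub_mul_qPoch_mul_succ (z q : ℂ) (k : ℕ) :
    (1 - z) * qPoch (q * z) q (k + 1) = qPoch z q k * (1 - z * q ^ k) * (1 - z * q ^ (k + 1)) := by
  rw [mul_comm q z, ← qPoch_succ', qPoch_succ, qPoch_succ]

/-- The operator `K₀^γ` of the basic representation of the confluent Zhedanov algebra `Z_V^γ`,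
in the rescaled variable. -/
noncomputable def confluentZhedanovK0 (q a b c : ℂ) (f : ℂ → ℂ) (x : ℂ) : ℂ :=
  q * (c * x + a * (x * (1 + b) - c * (1 + q - x))) / x ^ 2 * f x
    + (x - q * a) * (x - q * c) / x ^ 2 * f (x / q)
    + q * (x - 1) * a * (b * x - c) / x ^ 2 * f (q * x)

noncomputable def bigQJacobiEigenvalue (q a b : ℂ) (k : ℕ) : ℂ :=
  (q ^ k)⁻¹ * (1 + a * b * q ^ (2 * k + 1))

lemma confluentZhedanovK0_sum {ι : Type*} (q a b c : ℂ) (s : Finset ι) (w : ι → ℂ)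
    (f : ι → ℂ → ℂ) (x : ℂ) :
    confluentZhedanovK0 q a b c (fun y => ∑ i ∈ s, w i * f i y) x
      = ∑ i ∈ s, w i * confluentZhedanovK0 q a b c (f i) x := by
  simp only [confluentZhedanovK0, mul_sum, ← sum_add_distrib]
  exact sum_congr rfl fun i _ => by ring

lemma confluentZhedanovK0_qPoch_zero (q a b c : ℂ) {x : ℂ} (hx : x ≠ 0) :
    confluentZhedanovK0 q a b c (fun y => qPoch y q 0) x
      = bigQJacobiEigenvalue q a b 0 * qPoch x q 0 := by
  simp only [confluentZhedanovK0, bigQJacobiEigenvalue, qPoch_zero]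
  field_simp
  ring

lemma confluentZhedanovK0_qPoch_succ (a b c : ℂ) {q x : ℂ} (hq : q ≠ 0) (hx : x ≠ 0) (k : ℕ) :
    confluentZhedanovK0 q a b c (fun y => qPoch y q (k + 1)) x
      = bigQJacobiEigenvalue q a b (k + 1) * qPoch x q (k + 1)
        - (q ^ (k + 1))⁻¹ * ((1 - q ^ (k + 1)) * (1 - a * q ^ (k + 1)) * (1 - c * q ^ (k + 1)))
          * qPoch x q k := by
  have hup : q * (x - 1) * a * (b * x - c) / x ^ 2 * qPoch (q * x) q (k + 1)
      = -(q * a * (b * x - c) / x ^ 2) * ((1 - x) * qPoch (q * x) q (k + 1)) := by ring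
  simp only [confluentZhedanovK0, bigQJacobiEigenvalue]
  rw [hup, one_sub_mul_qPoch_mul_succ, qPoch_div_succ hq, qPoch_succ x]
  field_simp
  ring

/-- The values `u k` play the role of the images `T (v k)` of a basis under a lower bidiagonal
operator `T`. -/
theorem sum_mul_eq_of_bidiagonal {R : Type*} [CommRing R] (n : ℕ) (lam μ w u v : ℕ → R)
    (h0 : u 0 = lam 0 * v 0)
    (hsucc : ∀ k < n, u (k + 1) = lam (k + 1) * v (k + 1) + μ (k + 1) * v k)
    (hw : ∀ k < n, w (k + 1) * μ (k + 1) = w k * (lam n - lam k)) :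
    ∑ k ∈ range (n + 1), w k * u k = lam n * ∑ k ∈ range (n + 1), w k * v k := by
  have hshift : ∀ k ∈ range n, w (k + 1) * u (k + 1)
      = w (k + 1) * lam (k + 1) * v (k + 1) + w k * (lam n - lam k) * v k := by
    intro k hk
    rw [hsucc k (mem_range.mp hk), ← hw k (mem_range.mp hk)]
    ring
  rw [sum_range_succ', sum_congr rfl hshift, sum_add_distrib, h0, add_right_comm, ← mul_assoc,
    ← sum_range_succ' (fun k => w k * lam k * v k), sum_range_succ, sum_range_succ, mul_add,
    mul_sum, add_right_comm, ← sum_add_distrib]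
  congr 1
  · exact sum_congr rfl fun k _ => by ring
  · ring

noncomputable def bigQJacobiCoeff (n : ℕ) (q a b c : ℂ) (k : ℕ) : ℂ :=
  qPoch (q ^ n)⁻¹ q k * qPoch (a * b * q ^ (n + 1)) q k
    / (qPoch q q k * qPoch (a * q) q k * qPoch (c * q) q k) * q ^ k

lemma bigQJacobiCoeff_succ (n : ℕ) (q a b c : ℂ) (k : ℕ) :
    bigQJacobiCoeff n q a b c (k + 1) = bigQJacobiCoeff n q a b c k
      * (q * (1 - (q ^ n)⁻¹ * q ^ k) * (1 - a * b * q ^ (n + 1) * q ^ k)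
        / ((1 - q * q ^ k) * (1 - a * q * q ^ k) * (1 - c * q * q ^ k))) := by
  simp only [bigQJacobiCoeff, qPoch_succ, div_eq_mul_inv, mul_inv]
  ring

lemma bigQJacobiCoeff_succ_mul (n : ℕ) (a b c : ℂ) {q : ℂ} (hq : q ≠ 0) (k : ℕ)
    (hqk : q ^ (k + 1) ≠ 1) (hak : a * q ^ (k + 1) ≠ 1) (hck : c * q ^ (k + 1) ≠ 1) :
    bigQJacobiCoeff n q a b c (k + 1)
        * -((q ^ (k + 1))⁻¹ * ((1 - q ^ (k + 1)) * (1 - a * q ^ (k + 1)) * (1 - c * q ^ (k + 1))))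
      = bigQJacobiCoeff n q a b c k
        * (bigQJacobiEigenvalue q a b n - bigQJacobiEigenvalue q a b k) := by
  rw [pow_succ'] at hqk hak hck ⊢
  have h1 : 1 - q * q ^ k ≠ 0 := sub_ne_zero.mpr hqk.symm
  have h2 : 1 - q * q ^ k * a ≠ 0 := by rw [mul_comm]; exact sub_ne_zero.mpr hak.symm
  have h3 : 1 - q * q ^ k * c ≠ 0 := by rw [mul_comm]; exact sub_ne_zero.mpr hck.symm
  simp only [bigQJacobiCoeff_succ, bigQJacobiEigenvalue, mul_assoc]
  field_simp
  ring

/-- The big q-Jacobi polynomials are eigenfunctions, with eigenvalue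
`q⁻ⁿ(1 + a b q^{2n+1})`, of the operator `K₀^γ` of the basic representation of
the confluent Zhedanov algebra `Z_V^γ` (in the rescaled variable). -/
theorem bigQJacobi_eigenfunction (n : ℕ) (q a b c : ℂ) (hq : q ≠ 0)
    (hqj : ∀ j : ℕ, 1 ≤ j → j ≤ n → q ^ j ≠ 1)
    (haj : ∀ j : ℕ, 1 ≤ j → j ≤ n → a * q ^ j ≠ 1)
    (hcj : ∀ j : ℕ, 1 ≤ j → j ≤ n → c * q ^ j ≠ 1)
    (P : ℂ → ℂ)
    (hP : ∀ x : ℂ, P x = ∑ k ∈ Finset.range (n + 1),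
        qPoch (q ^ n)⁻¹ q k * qPoch (a * b * q ^ (n + 1)) q k * qPoch x q k
          / (qPoch q q k * qPoch (a * q) q k * qPoch (c * q) q k) * q ^ k) :
    ∀ x : ℂ, x ≠ 0 →
      q * (c * x + a * (x * (1 + b) - c * (1 + q - x))) / x ^ 2 * P x
        + (x - q * a) * (x - q * c) / x ^ 2 * P (x / q)
        + q * (x - 1) * a * (b * x - c) / x ^ 2 * P (q * x)
        = (q ^ n)⁻¹ * (1 + a * b * q ^ (2 * n + 1)) * P x := by
  intro x hx
  have hP_sum : P = fun y => ∑ k ∈ range (n + 1), bigQJacobiCoeff n q a b c k * qPoch y q k :=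
    funext fun y => (hP y).trans (sum_congr rfl fun k _ => by rw [bigQJacobiCoeff]; ring)
  change confluentZhedanovK0 q a b c P x = bigQJacobiEigenvalue q a b n * P x
  rw [hP_sum, confluentZhedanovK0_sum]
  refine sum_mul_eq_of_bidiagonal n (bigQJacobiEigenvalue q a b)
    (fun k => -((q ^ k)⁻¹ * ((1 - q ^ k) * (1 - a * q ^ k) * (1 - c * q ^ k)))) _ _ _
    (confluentZhedanovK0_qPoch_zero q a b c hx)
    (fun k _ => (confluentZhedanovK0_qPoch_succ a b c hq hx k).trans (by ring))
    (fun k hk => bigQJacobiCoeff_succ_mul n a b c hq k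
      (hqj _ (by omega) hk) (haj _ (by omega) hk) (hcj _ (by omega) hk))
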